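/- For the 3×3 matrix A = M − (2/3)·I, where M_{xy} = cos(2π(x−y)/3), one has SDP_2(A) = 9/2 − 2 = 5/2 and SDP_1(A) = 2, hence K_G(2) ≥ 5/4. -/

import Mathlib

/-- `SDP k m₁ m₂ M` is the maximum of `∑ x y, M x y * ⟨a x, b y⟩` over families of
unit vectors `a x`, `b y` in the unit sphere of `ℝ^k`. -/
noncomputable def SDP (k m₁ m₂ : ℕ) (M : Matrix (Fin m₁) (Fin m₂) ℝ) : ℝ :=
  sSup { r : ℝ | ∃ (a : Fin m₁ → EuclideanSpace ℝ (Fin k)) (b : Fin m₂ → EuclideanSpace ℝ (Fin k)),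
    (∀ x, ‖a x‖ = 1) ∧ (∀ y, ‖b y‖ = 1) ∧
    r = ∑ x, ∑ y, M x y * (inner ℝ (a x) (b y) : ℝ) }

/-- The generalised Grothendieck constant `K_G(d → n)`, the supremum of the ratios
`SDP_d(M) / SDP_n(M)` over all real matrices `M` of all sizes. -/
noncomputable def KG (d n : ℕ) : ℝ :=
  sSup { r : ℝ | ∃ (m₁ m₂ : ℕ) (M : Matrix (Fin m₁) (Fin m₂) ℝ),
    0 < SDP n m₁ m₂ M ∧ r = SDP d m₁ m₂ M / SDP n m₁ m₂ M }

/-! The objective `∑ x y, A x y ⟪a x, b y⟫` of `A = M - (2/3) I` equals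
`(5/6) ∑ x ⟪a x, b x⟫ - (1/2) ⟪∑ a, ∑ b⟫`. For unit vectors in any real inner product space,
`5/2` minus it is a sum of squares, so `SDP_k(A) ≤ 5/2` for every `k`, with equality at the three
hexagon directions `a = b`. For signs the same expression is at most `2`, attained at `(1, 1, -1)`.
Finally `SDP_d(M) ≤ d · SDP_1(M)` for every matrix, since each coordinate of a vector solution,
rounded to signs one side at a time, is a feasible `SDP_1` point; hence `KG d 1` is the supremum of
a bounded set, and the ratio `(5/2)/2` lies in it. -/

open RealInnerProductSpace Finset

section SDP

variable {k m₁ m₂ : ℕ} (M : Matrix (Fin m₁) (Fin m₂) ℝ)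

lemma le_SDP (a : Fin m₁ → EuclideanSpace ℝ (Fin k)) (b : Fin m₂ → EuclideanSpace ℝ (Fin k))
    (ha : ∀ x, ‖a x‖ = 1) (hb : ∀ y, ‖b y‖ = 1) :
    ∑ x, ∑ y, M x y * ⟪a x, b y⟫ ≤ SDP k m₁ m₂ M := by
  refine le_csSup ⟨∑ x, ∑ y, |M x y|, ?_⟩ ⟨a, b, ha, hb, rfl⟩
  rintro _ ⟨a, b, ha, hb, rfl⟩
  gcongr with x _ y _
  have hinner : |⟪a x, b y⟫| ≤ 1 := by simpa [ha, hb] using abs_real_inner_le_norm (a x) (b y)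
  calc M x y * ⟪a x, b y⟫ ≤ |M x y| * |⟪a x, b y⟫| := by rw [← abs_mul]; exact le_abs_self _
    _ ≤ |M x y| := mul_le_of_le_one_right (abs_nonneg _) hinner

lemma SDP_le (hk : 0 < k) {r : ℝ}
    (h : ∀ (a : Fin m₁ → EuclideanSpace ℝ (Fin k)) (b : Fin m₂ → EuclideanSpace ℝ (Fin k)),
      (∀ x, ‖a x‖ = 1) → (∀ y, ‖b y‖ = 1) → ∑ x, ∑ y, M x y * ⟪a x, b y⟫ ≤ r) :
    SDP k m₁ m₂ M ≤ r := by
  let e : EuclideanSpace ℝ (Fin k) := EuclideanSpace.single ⟨0, hk⟩ 1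
  refine csSup_le ⟨_, fun _ => e, fun _ => e, by simp [e], by simp [e], rfl⟩ ?_
  rintro _ ⟨a, b, ha, hb, rfl⟩
  exact h a b ha hb

end SDP

/-- Unlike `Real.sign`, never `0`. -/
noncomputable def unitSign (r : ℝ) : ℝ := if 0 ≤ r then 1 else -1

lemma abs_unitSign (r : ℝ) : |unitSign r| = 1 := by
  unfold unitSign; split_ifs <;> simp

lemma mul_unitSign (r : ℝ) : r * unitSign r = |r| := by
  unfold unitSign; split_ifs with h
  · rw [mul_one, abs_of_nonneg h]
  · rw [mul_neg_one, abs_of_neg (not_le.mp h)]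

lemma sum_mul_le_sum_mul_unitSign {ι : Type*} [Fintype ι] (c u : ι → ℝ) (hu : ∀ i, |u i| ≤ 1) :
    ∑ i, c i * u i ≤ ∑ i, c i * unitSign (c i) := by
  refine sum_le_sum fun i _ => ?_
  rw [mul_unitSign]
  calc c i * u i ≤ |c i| * |u i| := by rw [← abs_mul]; exact le_abs_self _
    _ ≤ |c i| := mul_le_of_le_one_right (abs_nonneg _) (hu i)

lemma sum_mul_le_SDP_one {m₁ m₂ : ℕ} (M : Matrix (Fin m₁) (Fin m₂) ℝ)
    (u : Fin m₁ → ℝ) (v : Fin m₂ → ℝ) (hu : ∀ x, |u x| ≤ 1) (hv : ∀ y, |v y| ≤ 1) :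
    ∑ x, ∑ y, M x y * (u x * v y) ≤ SDP 1 m₁ m₂ M := by
  let t y := unitSign (∑ x, M x y * u x)
  let s x := unitSign (∑ y, M x y * t y)
  let e (r : ℝ) : EuclideanSpace ℝ (Fin 1) := EuclideanSpace.single 0 r
  calc ∑ x, ∑ y, M x y * (u x * v y) = ∑ y, (∑ x, M x y * u x) * v y := by
        simp_rw [sum_mul]; rw [sum_comm]
        exact sum_congr rfl fun _ _ => sum_congr rfl fun _ _ => by ring
    _ ≤ ∑ y, (∑ x, M x y * u x) * t y := sum_mul_le_sum_mul_unitSign _ _ hv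
    _ = ∑ x, (∑ y, M x y * t y) * u x := by
        simp_rw [sum_mul]; rw [sum_comm]
        exact sum_congr rfl fun _ _ => sum_congr rfl fun _ _ => by ring
    _ ≤ ∑ x, (∑ y, M x y * t y) * s x := sum_mul_le_sum_mul_unitSign _ _ hu
    _ = ∑ x, ∑ y, M x y * ⟪e (s x), e (t y)⟫ := by
        simp_rw [sum_mul]
        exact sum_congr rfl fun _ _ => sum_congr rfl fun _ _ => by
          simp only [e, EuclideanSpace.inner_single_left, PiLp.single_eq_same, Real.ringHom_apply]
          ring
    _ ≤ SDP 1 m₁ m₂ M :=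
        le_SDP M _ _ (fun _ => by simp [e, s, abs_unitSign]) (fun _ => by simp [e, t, abs_unitSign])

lemma SDP_le_mul_SDP_one {k m₁ m₂ : ℕ} (hk : 0 < k) (M : Matrix (Fin m₁) (Fin m₂) ℝ) :
    SDP k m₁ m₂ M ≤ k * SDP 1 m₁ m₂ M := by
  refine SDP_le M hk fun a b ha hb => ?_
  calc ∑ x, ∑ y, M x y * ⟪a x, b y⟫ = ∑ i : Fin k, ∑ x, ∑ y, M x y * (a x i * b y i) := by
        simp only [PiLp.inner_apply, RCLike.inner_apply, conj_trivial, mul_sum]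
        symm; rw [sum_comm]; refine sum_congr rfl fun x _ => ?_
        rw [sum_comm]; simp_rw [mul_comm (a _ _)]
    _ ≤ ∑ _i : Fin k, SDP 1 m₁ m₂ M := sum_le_sum fun i _ => sum_mul_le_SDP_one M _ _
        (fun x => ha x ▸ PiLp.norm_apply_le (a x) i) (fun y => hb y ▸ PiLp.norm_apply_le (b y) i)
    _ = k * SDP 1 m₁ m₂ M := by simp

lemma div_SDP_one_le_KG {d m₁ m₂ : ℕ} (hd : 0 < d) (M : Matrix (Fin m₁) (Fin m₂) ℝ)
    (hM : 0 < SDP 1 m₁ m₂ M) : SDP d m₁ m₂ M / SDP 1 m₁ m₂ M ≤ KG d 1 := by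
  refine le_csSup ⟨d, ?_⟩ ⟨m₁, m₂, M, hM, rfl⟩
  rintro _ ⟨m₁, m₂, M, hpos, rfl⟩
  rw [div_le_iff₀ hpos]
  exact SDP_le_mul_SDP_one hd M

open Real

noncomputable def hexagonMatrix : Matrix (Fin 3) (Fin 3) ℝ :=
  Matrix.of fun x y => if x = y then 1 / 3 else -1 / 2

lemma cos_two_pi_mul_div_three {n : ℝ} (hn : n = 1 ∨ n = 2 ∨ n = -1 ∨ n = -2) :
    cos (2 * π * n / 3) = -1 / 2 := by
  have h₁ : cos (2 * π / 3) = -1 / 2 := by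
    rw [show 2 * π / 3 = π - π / 3 by ring, cos_pi_sub, cos_pi_div_three]; norm_num
  have h₂ : cos (2 * π * 2 / 3) = -1 / 2 := by
    rw [show 2 * π * 2 / 3 = 2 * π - 2 * π / 3 by ring, cos_two_pi_sub, h₁]
  rcases hn with rfl | rfl | rfl | rfl
  · simpa using h₁
  · exact h₂
  · rw [show 2 * π * -1 / 3 = -(2 * π / 3) by ring, cos_neg, h₁]
  · rw [show 2 * π * -2 / 3 = -(2 * π * 2 / 3) by ring, cos_neg, h₂]

lemma sub_smul_one_eq_hexagonMatrix (M : Matrix (Fin 3) (Fin 3) ℝ)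
    (hM : ∀ x y, M x y = Real.cos (2 * Real.pi * ((x : ℝ) - (y : ℝ)) / 3)) :
    M - (2 / 3 : ℝ) • (1 : Matrix (Fin 3) (Fin 3) ℝ) = hexagonMatrix := by
  ext x y
  simp only [Matrix.sub_apply, Matrix.smul_apply, Matrix.one_apply, hM, hexagonMatrix,
    Matrix.of_apply]
  split_ifs with h
  · subst h; norm_num
  · rw [cos_two_pi_mul_div_three (by revert h; fin_cases x <;> fin_cases y <;> norm_num)]
    simp

lemma sum_hexagonMatrix_mul_inner_le {E : Type*} [NormedAddCommGroup E] [InnerProductSpace ℝ E]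
    (a b : Fin 3 → E) (ha : ∀ x, ‖a x‖ = 1) (hb : ∀ y, ‖b y‖ = 1) :
    ∑ x, ∑ y, hexagonMatrix x y * ⟪a x, b y⟫ ≤ 5 / 2 := by
  -- With `d x = a x - b x`, `5/2 - objective` equals
  -- `(1/24) ∑ ‖d x‖² + (1/8) ‖∑ (a x + b x)‖² + (1/8) ∑_{x<y} ‖d x - d y‖²`.
  have s₁ : 0 ≤ ∑ x, ‖a x - b x‖ ^ 2 := by positivity
  have s₂ : 0 ≤ ‖∑ x, (a x + b x)‖ ^ 2 := by positivity
  have s₃ : 0 ≤ ‖(a 0 - b 0) - (a 1 - b 1)‖ ^ 2 + ‖(a 0 - b 0) - (a 2 - b 2)‖ ^ 2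
      + ‖(a 1 - b 1) - (a 2 - b 2)‖ ^ 2 := by positivity
  simp only [Fin.sum_univ_three, ← real_inner_self_eq_norm_sq, inner_add_left, inner_add_right,
    inner_sub_left, inner_sub_right] at s₁ s₂ s₃
  simp only [real_inner_self_eq_norm_sq, ha, hb, real_inner_comm (a _) (b _)] at s₁ s₂ s₃
  simp only [hexagonMatrix, Matrix.of_apply, Fin.sum_univ_three, Fin.isValue, Fin.reduceEq,
    ↓reduceIte]
  linarith

/-- `(cos (2πx/3), sin (2πx/3))`. -/
noncomputable def hexagonVector : Fin 3 → EuclideanSpace ℝ (Fin 2) :=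
  ![!₂[1, 0], !₂[-1 / 2, √3 / 2], !₂[-1 / 2, -(√3 / 2)]]

lemma inner_hexagonVector (x y : Fin 3) :
    ⟪hexagonVector x, hexagonVector y⟫ = if x = y then 1 else -1 / 2 := by
  rw [PiLp.inner_apply, Fin.sum_univ_two]
  fin_cases x <;> fin_cases y <;> norm_num [hexagonVector, div_mul_div_comm, div_pow]

lemma norm_hexagonVector (x : Fin 3) : ‖hexagonVector x‖ = 1 := by
  rw [norm_eq_sqrt_real_inner, inner_hexagonVector, if_pos rfl, sqrt_one]

lemma SDP_two_hexagonMatrix : SDP 2 3 3 hexagonMatrix = 5 / 2 := by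
  refine le_antisymm (SDP_le _ two_pos fun a b ha hb => sum_hexagonMatrix_mul_inner_le a b ha hb) ?_
  refine Eq.trans_le ?_
    (le_SDP hexagonMatrix hexagonVector hexagonVector norm_hexagonVector norm_hexagonVector)
  simp only [hexagonMatrix, Matrix.of_apply, inner_hexagonVector, Fin.sum_univ_three, Fin.isValue,
    Fin.reduceEq, ↓reduceIte]
  norm_num

lemma sum_hexagonMatrix_mul_sign_le (s t : Fin 3 → ℝ) (hs : ∀ x, s x = 1 ∨ s x = -1)
    (ht : ∀ y, t y = 1 ∨ t y = -1) : ∑ x, ∑ y, hexagonMatrix x y * (s x * t y) ≤ 2 := by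
  simp only [hexagonMatrix, Matrix.of_apply, Fin.sum_univ_three, Fin.isValue, Fin.reduceEq,
    ↓reduceIte]
  rcases hs 0 with h₀ | h₀ <;> rcases hs 1 with h₁ | h₁ <;> rcases hs 2 with h₂ | h₂ <;>
    rcases ht 0 with k₀ | k₀ <;> rcases ht 1 with k₁ | k₁ <;> rcases ht 2 with k₂ | k₂ <;>
    norm_num [h₀, h₁, h₂, k₀, k₁, k₂]

lemma eq_one_or_eq_neg_one_of_norm_eq_one {v : EuclideanSpace ℝ (Fin 1)} (hv : ‖v‖ = 1) :
    v 0 = 1 ∨ v 0 = -1 := by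
  rw [EuclideanSpace.norm_eq, Fin.sum_univ_one, Real.norm_eq_abs, sq_abs, sqrt_sq_eq_abs] at hv
  exact (abs_eq zero_le_one).mp hv

lemma SDP_one_hexagonMatrix : SDP 1 3 3 hexagonMatrix = 2 := by
  refine le_antisymm (SDP_le _ one_pos fun a b ha hb => ?_) ?_
  · have hinner (x y : Fin 3) : ⟪a x, b y⟫ = a x 0 * b y 0 := by simp [PiLp.inner_apply, mul_comm]
    simp only [hinner]
    exact sum_hexagonMatrix_mul_sign_le _ _ (fun x => eq_one_or_eq_neg_one_of_norm_eq_one (ha x))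
      (fun y => eq_one_or_eq_neg_one_of_norm_eq_one (hb y))
  · let e (x : Fin 3) : EuclideanSpace ℝ (Fin 1) := EuclideanSpace.single 0 (![1, 1, -1] x)
    refine Eq.trans_le ?_ (le_SDP hexagonMatrix e e (fun x => ?_) (fun x => ?_))
    · simp only [e, hexagonMatrix, Matrix.of_apply, EuclideanSpace.inner_single_left,
        PiLp.single_eq_same, Fin.sum_univ_three, Fin.isValue, Fin.reduceEq, ↓reduceIte]
      norm_num [Matrix.cons_val_two, Matrix.tail_cons, Matrix.head_cons]
    all_goals fin_cases x <;> simp [e]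

theorem hexagon_diagonal_modification_bound
    (M : Matrix (Fin 3) (Fin 3) ℝ)
    (hM : ∀ x y, M x y = Real.cos (2 * Real.pi * ((x : ℝ) - (y : ℝ)) / 3)) :
    SDP 2 3 3 (M - (2 / 3 : ℝ) • (1 : Matrix (Fin 3) (Fin 3) ℝ)) = 5 / 2 ∧
    SDP 1 3 3 (M - (2 / 3 : ℝ) • (1 : Matrix (Fin 3) (Fin 3) ℝ)) = 2 ∧
    5 / 4 ≤ KG 2 1 := by
  rw [sub_smul_one_eq_hexagonMatrix M hM]
  refine ⟨SDP_two_hexagonMatrix, SDP_one_hexagonMatrix, ?_⟩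
  calc (5 / 4 : ℝ) = SDP 2 3 3 hexagonMatrix / SDP 1 3 3 hexagonMatrix := by
        rw [SDP_two_hexagonMatrix, SDP_one_hexagonMatrix]; norm_num
    _ ≤ KG 2 1 := div_SDP_one_le_KG two_pos _ (by rw [SDP_one_hexagonMatrix]; norm_num)
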